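/- arXiv:cond-mat/0508089 — 3 statements merged into one kernel-verified Lean document; each statement's English description precedes it below -/
import Mathlib

section
/- Let $(\Omega,\rho)$ be a probability space, $f:\Omega\to\Omega$ a bijective measure-preserving transformation, $(P_i)_{i\in I}$ a countable measurable partition of $\Omega$ with $\rho(P_i)>0$ for every $i\in I$, and $\phi:I\to I$ a map such that $\rho((f^{-1}P_{\phi(i)})^c\cap P_i)=0$ for all $i$. Then for every $i\in I$ there exists $k\geq 1$ with $\phi^k(i)=i$; i.e., every $\phi$-orbit is a closed cycle. -/
/-!
Write `w j = ρ (P j)`. Since `P j` lies a.e. in `f⁻¹ P (φ j)` and `f` preserves `ρ`, the weight `w`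
does not decrease along `φ`, and two distinct macrostates with the same image carry together at most
the weight of that image. By the first fact the `φ`-orbit of `i` stays among the finitely many `j`
with `w i ≤ w j`, so it reaches a periodic point. If `φ x` is periodic but `x` is not, the periodic
predecessor `y ≠ x` of `φ x` collides with `x`, giving `w x + w y ≤ w (φ x) ≤ w y`, which is absurd
as `w x > 0`. Walking back along the orbit, `i` itself is periodic.
-/

open MeasureTheory Function

open scoped ENNReal

theorem MeasureTheory.MeasurePreserving.measure_le_of_ae_le_preimage {α β : Type*}
    [MeasurableSpace α] [MeasurableSpace β] {μ : Measure α} {ν : Measure β} {f : α → β}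
    (hf : MeasurePreserving f μ ν) {s : Set α} {t : Set β} (ht : NullMeasurableSet t ν)
    (hst : s ≤ᵐ[μ] f ⁻¹' t) : μ s ≤ ν t :=
  (measure_mono_ae hst).trans_eq (hf.measure_preimage ht)

theorem Function.exists_iterate_mem_periodicPts_of_finite {α : Type*} {f : α → α} {x : α}
    {s : Set α} (hs : s.Finite) (hx : ∀ n, f^[n] x ∈ s) : ∃ m, f^[m] x ∈ periodicPts f := by
  obtain ⟨a, b, hab, heq⟩ := hs.exists_lt_map_eq_of_forall_mem hx
  refine ⟨a, mk_mem_periodicPts (Nat.sub_pos_of_lt hab) ?_⟩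
  rw [IsPeriodicPt, IsFixedPt, ← iterate_add_apply, Nat.sub_add_cancel hab.le, heq]

section Weight

variable {I : Type*} {φ : I → I} {w : I → ℝ≥0∞}

theorem le_weight_iterate (hmono : ∀ j, w j ≤ w (φ j)) (n : ℕ) (j : I) :
    w j ≤ w (φ^[n] j) :=
  monotone_nat_of_le_succ (f := fun n ↦ w (φ^[n] j))
    (fun n ↦ by simpa only [iterate_succ_apply'] using hmono _) (Nat.zero_le n)

theorem isPeriodicPt_of_isPeriodicPt_apply (hpos : ∀ j, w j ≠ 0) (hfin : ∀ j, w j ≠ ∞)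
    (hmono : ∀ j, w j ≤ w (φ j))
    (hcoll : ∀ j j', j ≠ j' → φ j = φ j' → w j + w j' ≤ w (φ j))
    {x : I} {p : ℕ} (hp : IsPeriodicPt φ p (φ x)) : IsPeriodicPt φ p x := by
  cases p with
  | zero => exact isPeriodicPt_zero φ x
  | succ n =>
    by_contra hne
    set y := φ^[n + 1] x
    have hy : φ^[n] (φ x) = y := (iterate_succ_apply φ n x).symm
    have hcollide : φ x = φ y := hp.eq.symm.trans ((Commute.iterate_self φ (n + 1)).eq x)
    have : w x + w y ≤ w y :=
      (hcoll x y (Ne.symm hne) hcollide).trans (hy ▸ le_weight_iterate hmono n (φ x))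
    exact this.not_gt (by rw [add_comm]; exact ENNReal.lt_add_right (hfin y) (hpos x))

theorem mem_periodicPts_of_iterate_mem (hpos : ∀ j, w j ≠ 0) (hfin : ∀ j, w j ≠ ∞)
    (hmono : ∀ j, w j ≤ w (φ j))
    (hcoll : ∀ j j', j ≠ j' → φ j = φ j' → w j + w j' ≤ w (φ j))
    {x : I} (m : ℕ) (hm : φ^[m] x ∈ periodicPts φ) : x ∈ periodicPts φ := by
  induction m generalizing x with
  | zero => exact hm
  | succ m ih =>
    obtain ⟨p, hp, hper⟩ := mem_periodicPts.mp (ih (x := φ x) hm)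
    exact mk_mem_periodicPts hp (isPeriodicPt_of_isPeriodicPt_apply hpos hfin hmono hcoll hper)

theorem mem_periodicPts_of_finite_superlevel (hpos : ∀ j, w j ≠ 0) (hfin : ∀ j, w j ≠ ∞)
    (hmono : ∀ j, w j ≤ w (φ j))
    (hcoll : ∀ j j', j ≠ j' → φ j = φ j' → w j + w j' ≤ w (φ j))
    (hlevel : ∀ j, {k | w j ≤ w k}.Finite) (i : I) : i ∈ periodicPts φ := by
  obtain ⟨m, hm⟩ :=
    exists_iterate_mem_periodicPts_of_finite (hlevel i) (le_weight_iterate hmono · i)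
  exact mem_periodicPts_of_iterate_mem hpos hfin hmono hcoll m hm

end Weight

theorem stmt_2_general {Ω : Type*} [MeasurableSpace Ω] (ρ : Measure Ω)
    [IsProbabilityMeasure ρ]
    (f : Ω → Ω) (hf : MeasurePreserving f ρ ρ)
    {I : Type*} (P : I → Set Ω)
    (hmeas : ∀ i, MeasurableSet (P i))
    (hdisj : Pairwise (Function.onFun Disjoint P))
    (hpos : ∀ i, 0 < ρ (P i))
    (φ : I → I)
    (haut : ∀ i, ρ ((f ⁻¹' P (φ i))ᶜ ∩ P i) = 0) :
    ∀ i, ∃ k ≥ 1, φ^[k] i = i := by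
  have hsub : ∀ j, P j ≤ᵐ[ρ] f ⁻¹' P (φ j) := fun j ↦ by
    rw [ae_le_set, Set.sdiff_eq, Set.inter_comm]; exact haut j
  have hle : ∀ {s} j, s ≤ᵐ[ρ] f ⁻¹' P (φ j) → ρ s ≤ ρ (P (φ j)) := fun j ↦
    hf.measure_le_of_ae_le_preimage (hmeas (φ j)).nullMeasurableSet
  have hcoll : ∀ j j', j ≠ j' → φ j = φ j' → ρ (P j) + ρ (P j') ≤ ρ (P (φ j)) := by
    intro j j' hne heq
    rw [← measure_union (hdisj hne) (hmeas j')]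
    have hunion := (hsub j).union (heq ▸ hsub j')
    rw [Set.union_self] at hunion
    exact hle j hunion
  intro i
  exact mem_periodicPts.mp <|
    mem_periodicPts_of_finite_superlevel (w := fun j ↦ ρ (P j)) (fun j ↦ (hpos j).ne')
      (fun j ↦ measure_ne_top ρ _) (fun j ↦ hle j (hsub j)) hcoll
      (fun j ↦ Measure.finite_const_le_meas_of_disjoint_iUnion ρ (hpos j) hmeas hdisj
        (measure_ne_top ρ _)) i

theorem stmt_2 {Ω : Type*} [MeasurableSpace Ω] (ρ : Measure Ω)
    [IsProbabilityMeasure ρ]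
    (f : Ω → Ω) (hbij : Function.Bijective f) (hf : MeasurePreserving f ρ ρ)
    {I : Type*} [Countable I] (P : I → Set Ω)
    (hmeas : ∀ i, MeasurableSet (P i))
    (hdisj : Pairwise (Function.onFun Disjoint P))
    (hcover : (⋃ i, P i) = Set.univ)
    (hpos : ∀ i, 0 < ρ (P i))
    (φ : I → I)
    (haut : ∀ i, ρ ((f ⁻¹' P (φ i))ᶜ ∩ P i) = 0) :
    ∀ i, ∃ k ≥ 1, φ^[k] i = i :=
  stmt_2_general ρ f hf P hmeas hdisj hpos φ haut
end

section
/- Let $(\Omega,\rho)$ be a probability space, $f:\Omega\to\Omega$ a bijective measure-preserving transformation, $(P_i)_{i\in I}$ a countable measurable partition with $\rho(P_i)>0$ for all $i$, and $\phi:I\to I$ with $\rho((f^{-1}P_{\phi(i)})^c\cap P_i)=0$ for all $i$. Then $\rho(P_{\phi(i)})=\rho(P_i)$ for every $i\in I$; i.e., the entropy is strictly constant along the macroscopic evolution. -/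
/-!
Since `f` preserves `ρ` and maps `P i` into `P (φ i)` up to a null set, `ρ (P i) ≤ ρ (P (φ i))`,
and hence `ρ` is nondecreasing along every `φ`-orbit. Let `A` be the union of the cells on the
forward orbit of `φ i`; then `f` maps `A` into itself up to a null set. If `i` were not on that
orbit, `f` would also map the disjoint cell `P i` into `A`, so `ρ (P i) + ρ A ≤ ρ (f ⁻¹' A) = ρ A`,
forcing `ρ (P i) = 0`. Hence `i` is periodic, and monotonicity around the cycle gives equality.
-/

open MeasureTheory Filter Set Function

section MacroscopicMap

variable {Ω I : Type*} [MeasurableSpace Ω] {ρ : Measure Ω} {f : Ω → Ω} {P : I → Set Ω}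
  {φ : I → I}

theorem measure_le_of_ae_subset_preimage (hf : MeasurePreserving f ρ ρ) {s t : Set Ω}
    (ht : MeasurableSet t) (h : s ≤ᵐ[ρ] f ⁻¹' t) : ρ s ≤ ρ t :=
  (measure_mono_ae h).trans_eq (hf.measure_preimage ht.nullMeasurableSet)

theorem measure_le_measure_iterate (hf : MeasurePreserving f ρ ρ)
    (hmeas : ∀ i, MeasurableSet (P i)) (hsub : ∀ i, P i ≤ᵐ[ρ] f ⁻¹' P (φ i)) (n : ℕ) (i : I) :
    ρ (P i) ≤ ρ (P (φ^[n] i)) := by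
  induction n generalizing i with
  | zero => rfl
  | succ n ih =>
    rw [iterate_succ_apply]
    exact (measure_le_of_ae_subset_preimage hf (hmeas _) (hsub i)).trans (ih (φ i))

theorem iUnion_iterate_ae_subset_preimage (hsub : ∀ i, P i ≤ᵐ[ρ] f ⁻¹' P (φ i)) (j : I) :
    (⋃ n : ℕ, P (φ^[n] j)) ≤ᵐ[ρ] f ⁻¹' ⋃ n : ℕ, P (φ^[n] j) := by
  refine (Filter.EventuallyLE.countable_iUnion fun n => hsub (φ^[n] j)).trans
    (LE.le.eventuallyLE ?_)
  rw [← preimage_iUnion]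
  refine preimage_mono (iUnion_subset fun n => ?_)
  rw [← iterate_succ_apply' φ n j]
  exact subset_iUnion (fun n => P (φ^[n] j)) (n + 1)

theorem measure_eq_zero_of_forall_iterate_ne [IsFiniteMeasure ρ] (hf : MeasurePreserving f ρ ρ)
    (hmeas : ∀ i, MeasurableSet (P i)) (hdisj : Pairwise (Disjoint on P))
    (hsub : ∀ i, P i ≤ᵐ[ρ] f ⁻¹' P (φ i)) {i : I} (hi : ∀ n, φ^[n] (φ i) ≠ i) :
    ρ (P i) = 0 := by
  set A := ⋃ n : ℕ, P (φ^[n] (φ i))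
  have hA : MeasurableSet A := MeasurableSet.iUnion fun n => hmeas _
  have hdisjA : Disjoint (P i) A := disjoint_iUnion_right.mpr fun n => hdisj (hi n).symm
  have hinto : (P i ∪ A : Set Ω) ≤ᵐ[ρ] f ⁻¹' A :=
    (ae_le_set_union
      ((hsub i).trans (preimage_mono (subset_iUnion (fun n => P (φ^[n] (φ i))) 0)).eventuallyLE)
      (iUnion_iterate_ae_subset_preimage hsub (φ i))).trans (union_self _).le.eventuallyLE
  have hle : ρ (P i) + ρ A ≤ 0 + ρ A := by
    rw [← measure_union hdisjA hA, zero_add]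
    exact measure_le_of_ae_subset_preimage hf hA hinto
  exact nonpos_iff_eq_zero.mp (ENNReal.le_of_add_le_add_right (measure_ne_top ρ A) hle)

end MacroscopicMap

theorem stmt_3_general {Ω : Type*} [MeasurableSpace Ω] (ρ : Measure Ω)
    [IsProbabilityMeasure ρ]
    (f : Ω → Ω) (hf : MeasurePreserving f ρ ρ)
    {I : Type*} (P : I → Set Ω)
    (hmeas : ∀ i, MeasurableSet (P i))
    (hdisj : Pairwise (Function.onFun Disjoint P))
    (hpos : ∀ i, 0 < ρ (P i))
    (φ : I → I)
    (haut : ∀ i, ρ ((f ⁻¹' P (φ i))ᶜ ∩ P i) = 0) :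
    ∀ i, ρ (P (φ i)) = ρ (P i) := by
  have hsub : ∀ i, P i ≤ᵐ[ρ] f ⁻¹' P (φ i) := fun i =>
    ae_le_set.mpr (by rw [sdiff_eq, inter_comm]; exact haut i)
  intro i
  refine le_antisymm ?_ (measure_le_of_ae_subset_preimage hf (hmeas _) (hsub i))
  obtain ⟨n, hn⟩ : ∃ n, φ^[n] (φ i) = i := by
    by_contra! h
    exact (hpos i).ne' (measure_eq_zero_of_forall_iterate_ne hf hmeas hdisj hsub h)
  calc ρ (P (φ i)) ≤ ρ (P (φ^[n] (φ i))) := measure_le_measure_iterate hf hmeas hsub n _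
    _ = ρ (P i) := by rw [hn]

theorem stmt_3 {Ω : Type*} [MeasurableSpace Ω] (ρ : Measure Ω)
    [IsProbabilityMeasure ρ]
    (f : Ω → Ω) (hbij : Function.Bijective f) (hf : MeasurePreserving f ρ ρ)
    {I : Type*} [Countable I] (P : I → Set Ω)
    (hmeas : ∀ i, MeasurableSet (P i))
    (hdisj : Pairwise (Function.onFun Disjoint P))
    (hcover : (⋃ i, P i) = Set.univ)
    (hpos : ∀ i, 0 < ρ (P i))
    (φ : I → I)
    (haut : ∀ i, ρ ((f ⁻¹' P (φ i))ᶜ ∩ P i) = 0) :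
    ∀ i, ρ (P (φ i)) = ρ (P i) :=
  stmt_3_general ρ f hf P hmeas hdisj hpos φ haut
end

section
/- Under the assumptions of exact autonomy (probability space, $\rho$-preserving bijection $f$, countable partition $(P_i)$ with $\rho(P_i)>0$, map $\phi$ with $\rho((f^{-1}P_{\phi(i)})^c\cap P_i)=0$), if $\phi^n(i)=\phi^m(i)$ for some $n<m$ then $\phi^{n-1}(i)=\phi^{m-1}(i)$ whenever $n\geq 1$; i.e., $\phi$ is injective on each orbit (backward uniqueness on recurrent orbits). -/
/-!
Up to null sets, `f` maps each cell `P j` into the cell `P (φ j)`. Since `f` preserves `ρ`, the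
weight `w j = ρ (P j)` is nondecreasing along `φ`, and two distinct cells with a common image
have total weight at most that of the image. If `φ j = φ k` with `j ≠ k` and `k` lies on the forward
orbit of `φ j`, this gives `w j + w k ≤ w (φ j) ≤ w k`, impossible as `w j > 0` and `w k < ∞`.
-/

open MeasureTheory

section Orbit

variable {I : Type*} {φ : I → I} {w : I → ENNReal}

theorem le_apply_iterate (hmono : ∀ j, w j ≤ w (φ j)) (a : I) (d : ℕ) : w a ≤ w (φ^[d] a) :=
  monotone_nat_of_le_succ (f := fun d ↦ w (φ^[d] a))
    (fun d ↦ by simpa only [Function.iterate_succ_apply'] using hmono _) (Nat.zero_le d)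

theorem eq_of_apply_eq_of_eq_iterate (hfin : ∀ j, w j ≠ ⊤) (hpos : ∀ j, 0 < w j)
    (hmono : ∀ j, w j ≤ w (φ j)) (hsum : ∀ j k, j ≠ k → φ j = φ k → w j + w k ≤ w (φ j))
    {j k : I} {d : ℕ} (hk : k = φ^[d] (φ j)) (hjk : φ j = φ k) : j = k := by
  by_contra hne
  have hle : w j + w k ≤ w k :=
    (hsum j k hne hjk).trans (hk ▸ le_apply_iterate hmono (φ j) d)
  rw [add_comm] at hle
  exact (ENNReal.lt_add_right (hfin k) (hpos j).ne').not_ge hle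

theorem iterate_pred_eq_of_iterate_eq (hfin : ∀ j, w j ≠ ⊤) (hpos : ∀ j, 0 < w j)
    (hmono : ∀ j, w j ≤ w (φ j)) (hsum : ∀ j k, j ≠ k → φ j = φ k → w j + w k ≤ w (φ j))
    {i : I} {n m : ℕ} (hn : 1 ≤ n) (hnm : n < m) (heq : φ^[n] i = φ^[m] i) :
    φ^[n - 1] i = φ^[m - 1] i := by
  obtain ⟨n, rfl⟩ : ∃ n', n = n' + 1 := ⟨n - 1, by omega⟩
  obtain ⟨d, rfl⟩ : ∃ d, m = d + (n + 1) + 1 := ⟨m - n - 2, by omega⟩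
  simp only [Nat.add_sub_cancel] at heq ⊢
  refine eq_of_apply_eq_of_eq_iterate hfin hpos hmono hsum (d := d) ?_ ?_
  · rw [← Function.iterate_succ_apply' φ n, ← Function.iterate_add_apply]
  · simpa only [Function.iterate_succ_apply'] using heq

end Orbit

namespace MeasureTheory.MeasurePreserving

variable {Ω : Type*} [MeasurableSpace Ω] {ρ : Measure Ω} {f : Ω → Ω} {s s' t : Set Ω}

theorem measure_le_of_ae_le_preimage_s4 (hf : MeasurePreserving f ρ ρ)
    (ht : MeasurableSet t) (hst : s ≤ᵐ[ρ] f ⁻¹' t) : ρ s ≤ ρ t :=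
  (measure_mono_ae hst).trans_eq (hf.measure_preimage ht.nullMeasurableSet)

theorem measure_add_le_of_ae_le_preimage (hf : MeasurePreserving f ρ ρ)
    (ht : MeasurableSet t) (hdisj : Disjoint s s') (hs' : MeasurableSet s')
    (hst : s ≤ᵐ[ρ] f ⁻¹' t) (hs't : s' ≤ᵐ[ρ] f ⁻¹' t) : ρ s + ρ s' ≤ ρ t := by
  rw [← measure_union hdisj hs']
  exact hf.measure_le_of_ae_le_preimage_s4 ht (by simpa only [Set.union_self] using hst.union hs't)

end MeasureTheory.MeasurePreserving

theorem stmt_4_general {Ω : Type*} [MeasurableSpace Ω] (ρ : Measure Ω)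
    [IsProbabilityMeasure ρ]
    (f : Ω → Ω) (hf : MeasurePreserving f ρ ρ)
    {I : Type*} [Countable I] (P : I → Set Ω)
    (hmeas : ∀ i, MeasurableSet (P i))
    (hdisj : Pairwise (Function.onFun Disjoint P))
    (hpos : ∀ i, 0 < ρ (P i))
    (φ : I → I)
    (haut : ∀ i, ρ ((f ⁻¹' P (φ i))ᶜ ∩ P i) = 0) :
    ∀ i (n m : ℕ), 1 ≤ n → n < m → φ^[n] i = φ^[m] i → φ^[n - 1] i = φ^[m - 1] i := by
  have hsub : ∀ j, P j ≤ᵐ[ρ] f ⁻¹' P (φ j) := fun j ↦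
    ae_le_set.2 (by rw [Set.sdiff_eq, Set.inter_comm]; exact haut j)
  intro i n m hn hnm heq
  refine iterate_pred_eq_of_iterate_eq (w := fun j ↦ ρ (P j)) (fun j ↦ measure_ne_top ρ _) hpos
    (fun j ↦ hf.measure_le_of_ae_le_preimage_s4 (hmeas _) (hsub j)) ?_ hn hnm heq
  intro j k hjk hφ
  exact hf.measure_add_le_of_ae_le_preimage (hmeas _) (hdisj hjk) (hmeas k) (hsub j)
    (hφ ▸ hsub k)

theorem stmt_4 {Ω : Type*} [MeasurableSpace Ω] (ρ : Measure Ω)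
    [IsProbabilityMeasure ρ]
    (f : Ω → Ω) (hbij : Function.Bijective f) (hf : MeasurePreserving f ρ ρ)
    {I : Type*} [Countable I] (P : I → Set Ω)
    (hmeas : ∀ i, MeasurableSet (P i))
    (hdisj : Pairwise (Function.onFun Disjoint P))
    (hcover : (⋃ i, P i) = Set.univ)
    (hpos : ∀ i, 0 < ρ (P i))
    (φ : I → I)
    (haut : ∀ i, ρ ((f ⁻¹' P (φ i))ᶜ ∩ P i) = 0) :
    ∀ i (n m : ℕ), 1 ≤ n → n < m → φ^[n] i = φ^[m] i → φ^[n - 1] i = φ^[m - 1] i :=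
  stmt_4_general ρ f hf P hmeas hdisj hpos φ haut
end
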